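/- Let γ(s,t) be an arclength-parametrized inextensible flow of partially null curves in E⁴₁ with partially null Frenet frame {T, N, B₁, B₂}, curvatures k₁, k₂ (k₃ = 0), flow ∂γ/∂t = β₁T + β₂N + β₃B₁ + β₄B₂ (so ∂β₁/∂s = β₂k₁), ψ₁ = ⟨∂N/∂t, B₁⟩ and ψ₃ = ⟨∂B₁/∂t, B₂⟩. If ψ₁ ≠ 0, then k₂ = (1/ψ₁) ∂ψ₃/∂s. -/

import Mathlib

/-!
Since `∂B₁/∂s = 0`, the field `B₁` and hence `∂B₁/∂t` do not depend on `s`, so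
`∂ψ₃/∂s = ⟨∂B₁/∂t, ∂B₂/∂s⟩ = -k₂ ⟨∂B₁/∂t, N⟩`. Differentiating `⟨N, B₁⟩ = 0` in `t` gives
`⟨∂B₁/∂t, N⟩ = -ψ₁`, hence `∂ψ₃/∂s = k₂ ψ₁`.
-/

noncomputable section

/-- The Minkowski bilinear form on `ℝ⁴` with signature `(-,+,+,+)`. -/
def mink (v w : Fin 4 → ℝ) : ℝ :=
  -(v 0 * w 0) + v 1 * w 1 + v 2 * w 2 + v 3 * w 3

/-- The Minkowski norm `‖v‖ = √|⟨v,v⟩|`. -/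
def mnorm (v : Fin 4 → ℝ) : ℝ := Real.sqrt |mink v v|

lemma mink_symm (v w : Fin 4 → ℝ) : mink v w = mink w v := by
  simp only [mink]; ring

lemma mink_zero_left (w : Fin 4 → ℝ) : mink 0 w = 0 := by
  simp [mink]

lemma mink_smul_right (a : ℝ) (v w : Fin 4 → ℝ) : mink v (a • w) = a * mink v w := by
  simp only [mink, Pi.smul_apply, smul_eq_mul]; ring

section Derivatives

variable {f g : ℝ → Fin 4 → ℝ} {f' g' : Fin 4 → ℝ} {x : ℝ}

lemma HasDerivAt.mink (hf : HasDerivAt f f' x) (hg : HasDerivAt g g' x) :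
    HasDerivAt (fun y => mink (f y) (g y)) (mink f' (g x) + mink (f x) g') x := by
  have hfi := fun i => hasDerivAt_pi.1 hf i
  have hgi := fun i => hasDerivAt_pi.1 hg i
  have h := ((((hfi 0).mul (hgi 0)).neg.add ((hfi 1).mul (hgi 1))).add
    ((hfi 2).mul (hgi 2))).add ((hfi 3).mul (hgi 3))
  exact h.congr_deriv (by simp only [_root_.mink]; ring)

lemma mink_deriv_left_eq_neg_of_mink_const {c : ℝ} (hf : HasDerivAt f f' x)
    (hg : HasDerivAt g g' x) (hfg : ∀ y, mink (f y) (g y) = c) :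
    mink f' (g x) = -mink (f x) g' := by
  have hconst : HasDerivAt (fun y => mink (f y) (g y)) 0 x := by
    simpa only [hfg] using hasDerivAt_const x c
  linarith [(hf.mink hg).unique hconst]

end Derivatives

section Slices

variable {E : Type*} [NormedAddCommGroup E] [NormedSpace ℝ E] {F : ℝ → ℝ → E}

lemma differentiable_slice_fst (hF : Differentiable ℝ (fun p : ℝ × ℝ => F p.1 p.2)) (t : ℝ) :
    Differentiable ℝ (fun x => F x t) :=
  hF.comp (differentiable_id.prodMk (differentiable_const t))

lemma differentiable_slice_snd (hF : Differentiable ℝ (fun p : ℝ × ℝ => F p.1 p.2)) (s : ℝ) :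
    Differentiable ℝ (fun y => F s y) :=
  hF.comp ((differentiable_const s).prodMk differentiable_id)

lemma eq_of_deriv_fst_eq_zero (hF : Differentiable ℝ (fun p : ℝ × ℝ => F p.1 p.2))
    (h : ∀ s t, deriv (fun x => F x t) s = 0) (s s' : ℝ) : F s = F s' :=
  funext fun t => is_const_of_deriv_eq_zero (differentiable_slice_fst hF t) (fun x => h x t) s s'

end Slices

theorem k2_formula_partially_null_general
    (N B₁ B₂ : ℝ → ℝ → (Fin 4 → ℝ))
    (k₂ : ℝ → ℝ → ℝ)
    (ψ₁ ψ₃ : ℝ → ℝ → ℝ)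
    (hNsmooth : ContDiff ℝ (⊤ : ℕ∞) (fun p : ℝ × ℝ => N p.1 p.2))
    (hB₁smooth : ContDiff ℝ (⊤ : ℕ∞) (fun p : ℝ × ℝ => B₁ p.1 p.2))
    (hB₂smooth : ContDiff ℝ (⊤ : ℕ∞) (fun p : ℝ × ℝ => B₂ p.1 p.2))
    (hNB₁ : ∀ s t : ℝ, mink (N s t) (B₁ s t) = 0)
    (hfr₃ : ∀ s t : ℝ, deriv (fun x => B₁ x t) s = 0)
    (hfr₄ : ∀ s t : ℝ, deriv (fun x => B₂ x t) s = -(k₂ s t) • N s t)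
    (hψ₁ : ∀ s t : ℝ, ψ₁ s t = mink (deriv (fun x => N s x) t) (B₁ s t))
    (hψ₃ : ∀ s t : ℝ, ψ₃ s t = mink (deriv (fun x => B₁ s x) t) (B₂ s t)) :
    ∀ s t : ℝ, ψ₁ s t ≠ 0 →
      k₂ s t = (1 / ψ₁ s t) * deriv (fun x => ψ₃ x t) s := by
  intro s t hψ₁_ne
  have hN := hNsmooth.differentiable (by simp)
  have hB₁ := hB₁smooth.differentiable (by simp)
  have hB₂ := hB₂smooth.differentiable (by simp)
  set V := deriv (fun y => B₁ s y) t
  have hψ₃_eq : (fun x => ψ₃ x t) = fun x => mink V (B₂ x t) :=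
    funext fun x => by rw [hψ₃, eq_of_deriv_fst_eq_zero hB₁ hfr₃ x s]
  have hB₂_deriv : HasDerivAt (fun x => B₂ x t) (-(k₂ s t) • N s t) s :=
    hfr₄ s t ▸ (differentiable_slice_fst hB₂ t s).hasDerivAt
  have hψ₃_deriv : deriv (fun x => ψ₃ x t) s = -(k₂ s t) * mink V (N s t) := by
    rw [hψ₃_eq, ((hasDerivAt_const s V).mink hB₂_deriv).deriv, mink_zero_left,
      mink_smul_right, zero_add]
  have hVN : mink V (N s t) = -ψ₁ s t := by
    rw [hψ₁, mink_symm, mink_deriv_left_eq_neg_of_mink_const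
      (differentiable_slice_snd hN s t).hasDerivAt (differentiable_slice_snd hB₁ s t).hasDerivAt
      (hNB₁ s), neg_neg]
  rw [hψ₃_deriv, hVN]
  field_simp

theorem k2_formula_partially_null
    (γ T N B₁ B₂ : ℝ → ℝ → (Fin 4 → ℝ))
    (k₁ k₂ β₁ β₂ β₃ β₄ : ℝ → ℝ → ℝ)
    (ψ₁ ψ₃ : ℝ → ℝ → ℝ)
    (hγsmooth : ContDiff ℝ (⊤ : ℕ∞) (fun p : ℝ × ℝ => γ p.1 p.2))
    (hTsmooth : ContDiff ℝ (⊤ : ℕ∞) (fun p : ℝ × ℝ => T p.1 p.2))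
    (hNsmooth : ContDiff ℝ (⊤ : ℕ∞) (fun p : ℝ × ℝ => N p.1 p.2))
    (hB₁smooth : ContDiff ℝ (⊤ : ℕ∞) (fun p : ℝ × ℝ => B₁ p.1 p.2))
    (hB₂smooth : ContDiff ℝ (⊤ : ℕ∞) (fun p : ℝ × ℝ => B₂ p.1 p.2))
    (hk₁smooth : ContDiff ℝ (⊤ : ℕ∞) (fun p : ℝ × ℝ => k₁ p.1 p.2))
    (hk₂smooth : ContDiff ℝ (⊤ : ℕ∞) (fun p : ℝ × ℝ => k₂ p.1 p.2))
    (hβ₁smooth : ContDiff ℝ (⊤ : ℕ∞) (fun p : ℝ × ℝ => β₁ p.1 p.2))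
    (hβ₂smooth : ContDiff ℝ (⊤ : ℕ∞) (fun p : ℝ × ℝ => β₂ p.1 p.2))
    (hβ₃smooth : ContDiff ℝ (⊤ : ℕ∞) (fun p : ℝ × ℝ => β₃ p.1 p.2))
    (hβ₄smooth : ContDiff ℝ (⊤ : ℕ∞) (fun p : ℝ × ℝ => β₄ p.1 p.2))
    (hTT : ∀ s t : ℝ, mink (T s t) (T s t) = 1)
    (hNN : ∀ s t : ℝ, mink (N s t) (N s t) = 1)
    (hB₁B₁ : ∀ s t : ℝ, mink (B₁ s t) (B₁ s t) = 0)
    (hB₂B₂ : ∀ s t : ℝ, mink (B₂ s t) (B₂ s t) = 0)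
    (hB₁B₂ : ∀ s t : ℝ, mink (B₁ s t) (B₂ s t) = 1)
    (hTN : ∀ s t : ℝ, mink (T s t) (N s t) = 0)
    (hTB₁ : ∀ s t : ℝ, mink (T s t) (B₁ s t) = 0)
    (hTB₂ : ∀ s t : ℝ, mink (T s t) (B₂ s t) = 0)
    (hNB₁ : ∀ s t : ℝ, mink (N s t) (B₁ s t) = 0)
    (hNB₂ : ∀ s t : ℝ, mink (N s t) (B₂ s t) = 0)
    -- arclength parametrization and Frenet equations (k₃ = 0)
    (hT : ∀ s t : ℝ, T s t = deriv (fun x => γ x t) s)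
    (hunit : ∀ s t : ℝ, mnorm (deriv (fun x => γ x t) s) = 1)
    (hfr₁ : ∀ s t : ℝ, deriv (fun x => T x t) s = k₁ s t • N s t)
    (hfr₂ : ∀ s t : ℝ, deriv (fun x => N x t) s = -(k₁ s t) • T s t + k₂ s t • B₁ s t)
    (hfr₃ : ∀ s t : ℝ, deriv (fun x => B₁ x t) s = 0)
    (hfr₄ : ∀ s t : ℝ, deriv (fun x => B₂ x t) s = -(k₂ s t) • N s t)
    (hflow : ∀ s t : ℝ, deriv (fun x => γ s x) t =
      β₁ s t • T s t + β₂ s t • N s t + β₃ s t • B₁ s t + β₄ s t • B₂ s t)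
    -- inextensibility: ∂β₁/∂s = β₂k₁
    (hinext : ∀ s t : ℝ, deriv (fun x => β₁ x t) s = β₂ s t * k₁ s t)
    (hψ₁ : ∀ s t : ℝ, ψ₁ s t = mink (deriv (fun x => N s x) t) (B₁ s t))
    (hψ₃ : ∀ s t : ℝ, ψ₃ s t = mink (deriv (fun x => B₁ s x) t) (B₂ s t)) :
    ∀ s t : ℝ, ψ₁ s t ≠ 0 →
      k₂ s t = (1 / ψ₁ s t) * deriv (fun x => ψ₃ x t) s :=
  k2_formula_partially_null_general N B₁ B₂ k₂ ψ₁ ψ₃ hNsmooth hB₁smooth hB₂smooth hNB₁ hfr₃ hfr₄ hψ₁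
    hψ₃
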